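/- arXiv:2312.13165 — 7 statements merged into one kernel-verified Lean document; each statement's English description precedes it below -/
import Mathlib

section
/- Let m_K be the pushforward under l of Lebesgue measure on [0,1). Then: (a) m_K is non-atomic, i.e. m_K({y}) = 0 for every y ∈ K; and (b) m_K is invariant under any homeomorphism T : K → K satisfying T(l(x)) = l(F(x)) for all x ∈ (0,1), i.e. m_K(T⁻¹(B)) = m_K(B) for every Borel set B ⊆ K. -/
/-!
The forward orbit of `F 0` is dense and `F 0 ≠ 0` (otherwise `0` would be a fixed point), so
every subinterval of `[0,1]` contains a point of some `D_n⁺` and has positive `ρ`-mass. Hence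
`l` and `r` are strictly increasing on `[0,1]`: the fibres of `l` are singletons, which gives
(a), and `K` is a Borel set, being a union of injective images of intervals. For (b), the
semiconjugacy says `l⁻¹(T⁻¹ B) = F⁻¹(l⁻¹ B)` on `(0,1)`, and `F` preserves Lebesgue measure on
`[0,1)` because it is a bijective piecewise translation.
-/

open MeasureTheory Set

theorem Set.encard_range_fin_le {α : Type*} {k : ℕ} (g : Fin k → α) : (range g).encard ≤ k := by
  simpa [image_univ] using encard_image_le g univ

theorem exists_mem_Ioo_of_forall_dist_lt {f : ℕ → ℝ}
    (hf : ∀ z ∈ Ico (0 : ℝ) 1, ∀ ε > (0 : ℝ), ∃ n, |f n - z| < ε) {u v : ℝ} (hu : 0 ≤ u)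
    (huv : u < v) (hv : v ≤ 1) : ∃ n, f n ∈ Ioo u v := by
  obtain ⟨n, hn⟩ := hf ((u + v) / 2) ⟨by linarith, by linarith⟩ ((v - u) / 2) (by linarith)
  rw [abs_lt] at hn
  exact ⟨n, by linarith, by linarith⟩

namespace Fin

variable {α : Type*} [LinearOrder α]

theorem iUnion_Ico_castSucc_succ {d : ℕ} {x : Fin (d + 1) → α} (hx : Monotone x) :
    ⋃ i : Fin d, Ico (x i.castSucc) (x i.succ) = Ico (x 0) (x (last d)) := by
  induction d with
  | zero => simp
  | succ d ih =>
    rw [iUnion_fin_add_one_eq_iUnion_castSucc]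
    have ih' := ih (x := x ∘ castSucc) (hx.comp strictMono_castSucc.monotone)
    simp only [Function.comp_def, castSucc_zero, succ_castSucc] at ih' ⊢
    rw [ih', succ_last, Ico_union_Ico_eq_Ico (hx (zero_le _)) (hx (le_last _))]

theorem pairwise_disjoint_Ico_castSucc_succ {d : ℕ} {x : Fin (d + 1) → α} (hx : Monotone x) :
    Pairwise (Function.onFun Disjoint fun i : Fin d => Ico (x i.castSucc) (x i.succ)) := by
  intro i j hij
  simpa only [Function.onFun, orderSucc_castSucc] using
    hx.pairwise_disjoint_on_Ico_succ ((castSucc_injective d).ne hij)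

end Fin

theorem measure_restrict_preimage_of_piecewise_add {G ι : Type*} [Countable ι] [AddGroup G]
    [MeasurableSpace G] [MeasurableAdd G] (μ : Measure G) [μ.IsAddRightInvariant]
    {F : G → G} {s : Set G} (hF : BijOn F s s) {I : ι → Set G} (hIs : ⋃ i, I i = s)
    (hI : Pairwise (Function.onFun Disjoint I)) (hIm : ∀ i, MeasurableSet (I i)) {c : ι → G}
    (hc : ∀ i, ∀ y ∈ I i, F y = y + c i) {S : Set G} (hS : MeasurableSet S) :
    μ.restrict s (F ⁻¹' S) = μ.restrict s S := by
  have hsm : MeasurableSet s := hIs ▸ MeasurableSet.iUnion hIm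
  have hIsub : ∀ i, I i ⊆ s := fun i => hIs ▸ subset_iUnion I i
  have himage : ∀ i, F '' I i = (fun y => y + -c i) ⁻¹' I i := fun i => by
    rw [image_congr (hc i), image_add_right]
  have himage_meas : ∀ i, MeasurableSet (F '' I i) := fun i =>
    himage i ▸ (hIm i).preimage (measurable_add_const _)
  have hpiece : ∀ i, F ⁻¹' S ∩ I i = (fun y => y + c i) ⁻¹' (S ∩ F '' I i) := fun i => by
    ext y
    simp only [himage, mem_inter_iff, mem_preimage, add_neg_cancel_right]
    exact and_congr_left fun hy => by rw [hc i y hy]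
  have himage_disj : Pairwise (Function.onFun Disjoint fun i => F '' I i) := fun i j hij =>
    (hI hij).image hF.injOn (hIsub i) (hIsub j)
  calc μ.restrict s (F ⁻¹' S) = ∑' i, μ (F ⁻¹' S ∩ I i) := by
        rw [Measure.restrict_apply' hsm, ← hIs, inter_iUnion, measure_iUnion]
        · exact fun i j hij => (hI hij).mono inter_subset_right inter_subset_right
        · exact fun i => hpiece i ▸ (hS.inter (himage_meas i)).preimage (measurable_add_const _)
    _ = ∑' i, μ (S ∩ F '' I i) := by simp_rw [hpiece, measure_preimage_add_right]
    _ = μ.restrict s S := by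
        rw [Measure.restrict_apply' hsm, ← hF.image_eq, ← hIs, image_iUnion, inter_iUnion,
          measure_iUnion]
        · exact fun i j hij => (himage_disj hij).mono inter_subset_right inter_subset_right
        · exact fun i => hS.inter (himage_meas i)

section GeometricCount

variable {α : Type*} [MeasurableSpace α]

noncomputable def geometricCount (A : ℕ → Set α) : Measure α :=
  Measure.sum fun n => (2⁻¹ : ENNReal) ^ n • Measure.count.restrict (A n)

theorem isFiniteMeasure_geometricCount [MeasurableSingletonClass α] {A : ℕ → Set α} {N : ℕ}
    (hA : ∀ n, (A n).encard ≤ N) : IsFiniteMeasure (geometricCount A) := by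
  refine ⟨?_⟩
  have hcount : ∀ n, Measure.count (A n) ≤ N := fun n => by
    rw [Measure.count_apply (finite_of_encard_le_coe (hA n)).measurableSet]
    exact_mod_cast hA n
  calc geometricCount A univ = ∑' n, (2⁻¹ : ENNReal) ^ n * Measure.count (A n) := by
        simp [geometricCount, Measure.sum_apply _ MeasurableSet.univ]
    _ ≤ ∑' n, (2⁻¹ : ENNReal) ^ n * N := ENNReal.tsum_le_tsum fun n => by gcongr; exact hcount n
    _ = 2 * N := by
        rw [ENNReal.tsum_mul_right, ENNReal.tsum_geometric, ENNReal.one_sub_inv_two, inv_inv]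
    _ < ⊤ := by finiteness

theorem geometricCount_pos_of_mem {A : ℕ → Set α} {U : Set α} (hU : MeasurableSet U) {n : ℕ}
    {p : α} (hp : p ∈ A n ∩ U) : 0 < geometricCount A U := by
  calc (0 : ENNReal) < (2⁻¹ : ENNReal) ^ n * Measure.count (U ∩ A n) :=
        ENNReal.mul_pos (by simp) (Measure.count_ne_zero_iff.2 ⟨p, hp.2, hp.1⟩)
    _ = ((2⁻¹ : ENNReal) ^ n • Measure.count.restrict (A n)) U := by
        rw [Measure.smul_apply, smul_eq_mul, Measure.restrict_apply hU]
    _ ≤ geometricCount A U := Measure.le_iff'.1 (Measure.le_sum _ n) U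

end GeometricCount

theorem strictMonoOn_measure_Ico_toReal {ρ : Measure ℝ} [IsFiniteMeasure ρ] {a b : ℝ}
    (hρ : ∀ u v, a ≤ u → u < v → v ≤ b → 0 < ρ (Ioo u v)) :
    StrictMonoOn (fun y => (ρ (Ico a y)).toReal) (Icc a b) := by
  intro u hu v hv huv
  refine ENNReal.toReal_strict_mono (measure_ne_top _ _) ?_
  calc ρ (Ico a u) < ρ (Ico a u) + ρ (Ioo u v) :=
        ENNReal.lt_add_right (measure_ne_top _ _) (hρ u v hu.1 huv hv.2).ne'
    _ ≤ ρ (Ico a u) + ρ (Ico u v) := by gcongr; exact Ioo_subset_Ico_self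
    _ = ρ (Ico a v) := by
        rw [← measure_union Ico_disjoint_Ico_same measurableSet_Ico,
          Ico_union_Ico_eq_Ico hu.1 huv.le]

theorem strictMonoOn_measure_Icc_toReal {ρ : Measure ℝ} [IsFiniteMeasure ρ] {a b : ℝ}
    (hρ : ∀ u v, a ≤ u → u < v → v ≤ b → 0 < ρ (Ioo u v)) :
    StrictMonoOn (fun y => (ρ (Icc a y)).toReal) (Icc a b) := by
  intro u hu v hv huv
  refine ENNReal.toReal_strict_mono (measure_ne_top _ _) ?_
  calc ρ (Icc a u) < ρ (Icc a u) + ρ (Ioo u v) :=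
        ENNReal.lt_add_right (measure_ne_top _ _) (hρ u v hu.1 huv hv.2).ne'
    _ ≤ ρ (Icc a u) + ρ (Ioc u v) := by gcongr; exact Ioo_subset_Ioc_self
    _ = ρ (Icc a v) := by
        rw [← measure_union (disjoint_left.2 fun z hz hz' => hz'.1.not_ge hz.2) measurableSet_Ioc,
          Icc_union_Ioc_eq_Icc hu.1 huv.le]

theorem monotone_measure_Ico_toReal (ρ : Measure ℝ) [IsFiniteMeasure ρ] (a : ℝ) :
    Monotone fun y => (ρ (Ico a y)).toReal := fun _ _ huv =>
  ENNReal.toReal_mono (measure_ne_top _ _) (measure_mono (Ico_subset_Ico_right huv))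

theorem monotone_measure_Icc_toReal (ρ : Measure ℝ) [IsFiniteMeasure ρ] (a : ℝ) :
    Monotone fun y => (ρ (Icc a y)).toReal := fun _ _ huv =>
  ENNReal.toReal_mono (measure_ne_top _ _) (measure_mono (Icc_subset_Icc_right huv))

theorem nullSingletonClass_map_restrict_of_injOn {α β : Type*} [MeasurableSpace α]
    [MeasurableSpace β] [MeasurableSingletonClass β] {μ : Measure α} [NullSingletonClass μ] {s : Set α} {f : α → β}
    (hf : Measurable f) (hfs : InjOn f s) : NullSingletonClass (Measure.map f (μ.restrict s)) := by
  refine ⟨fun y => ?_⟩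
  rw [Measure.map_apply hf (measurableSet_singleton y),
    Measure.restrict_apply (hf (measurableSet_singleton y))]
  refine Subsingleton.measure_zero (fun a ha b hb => hfs ha.2 hb.2 ?_) μ
  rw [ha.1, hb.1]

theorem map_restrict_image_preimage_eq {α β : Type*} [MeasurableSpace α] [MeasurableSpace β]
    {μ : Measure α} {s t : Set α} (ht : MeasurableSet t) (hst : s =ᵐ[μ] t) {f : α → β}
    (hf : Measurable f) {F : α → α}
    (hF : ∀ S, MeasurableSet S → μ.restrict s (F ⁻¹' S) = μ.restrict s S)
    {K : Set β} (hK : MeasurableSet K) (hfK : MapsTo f t K) {T : K → K} (hTm : Measurable T)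
    (hT : ∀ (p : K) (y : α), y ∈ t → (p : β) = f y → (T p : β) = f (F y))
    {B : Set β} (hB : MeasurableSet B) :
    Measure.map f (μ.restrict s) (Subtype.val '' (T ⁻¹' (Subtype.val ⁻¹' B))) =
      Measure.map f (μ.restrict s) B := by
  have hA : MeasurableSet (Subtype.val '' (T ⁻¹' (Subtype.val ⁻¹' B))) :=
    hK.subtype_image (hTm (measurable_subtype_coe hB))
  have key : f ⁻¹' (Subtype.val '' (T ⁻¹' (Subtype.val ⁻¹' B))) ∩ t = F ⁻¹' (f ⁻¹' B) ∩ t := by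
    ext y
    refine ⟨fun ⟨⟨p, hp, hpy⟩, hy⟩ => ⟨?_, hy⟩, fun ⟨hyB, hy⟩ => ⟨?_, hy⟩⟩
    · simpa only [mem_preimage, ← hT p y hy hpy] using hp
    · refine ⟨⟨f y, hfK hy⟩, ?_, rfl⟩
      simpa only [mem_preimage, hT ⟨f y, hfK hy⟩ y hy rfl] using hyB
  rw [Measure.map_apply hf hA, Measure.map_apply hf hB, ← hF _ (hf hB),
    Measure.restrict_congr_set hst, Measure.restrict_apply' ht, Measure.restrict_apply' ht, key]

theorem statement2_general (d : ℕ) (hd : 1 ≤ d) (x : Fin (d + 1) → ℝ)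
    (hx0 : x 0 = 0) (hxd : x (Fin.last d) = 1) (hxmono : StrictMono x)
    (F G : ℝ → ℝ)
    (hbij : Set.BijOn F (Set.Ico 0 1) (Set.Ico 0 1))
    (htrans : ∀ i : Fin d, ∃ c : ℝ,
      ∀ y ∈ Set.Ico (x i.castSucc) (x i.succ), F y = y + c)
    (hmin : ∀ y ∈ Set.Ico (0 : ℝ) 1, ∀ z ∈ Set.Ico (0 : ℝ) 1, ∀ ε > (0 : ℝ),
      ∃ n : ℕ, |F^[n] y - z| < ε)
    (Dp Dm : ℕ → Set ℝ)
    (hDp : ∀ n : ℕ, Dp n =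
      F^[n] '' ((Set.range fun i : Fin d => F (x i.castSucc)) \ {0}))
    (hDm : ∀ n : ℕ, Dm n =
      G^[n] '' {y : ℝ | ∃ j : Fin (d + 1), j ≠ 0 ∧ j ≠ Fin.last d ∧ y = x j})
    (ρ : Measure ℝ)
    (hρ : ρ = Measure.sum fun n : ℕ =>
      ((2 : ENNReal)⁻¹) ^ n • Measure.count.restrict (Dp n ∪ Dm n))
    (l r : ℝ → ℝ)
    (hl : ∀ y : ℝ, l y = (ρ (Set.Ico 0 y)).toReal)
    (hr : ∀ y : ℝ, r y = (ρ (Set.Icc 0 y)).toReal)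
    (K : Set ℝ) (hK : K = l '' Set.Ioc 0 1 ∪ r '' Set.Ico 0 1)
    (mK : Measure ℝ)
    (hmK : mK = Measure.map l (volume.restrict (Set.Ico 0 1))) :
    (∀ y ∈ K, mK {y} = 0) ∧
    (∀ T : K ≃ₜ K,
      (∀ (p : K) (y : ℝ), y ∈ Set.Ioo (0 : ℝ) 1 → (p : ℝ) = l y →
        (T p : ℝ) = l (F y)) →
      ∀ B : Set ℝ, MeasurableSet B → B ⊆ K →
        mK (Subtype.val '' (⇑T ⁻¹' (Subtype.val ⁻¹' B))) = mK B) := by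
  change ρ = geometricCount (fun n => Dp n ∪ Dm n) at hρ
  subst hρ hK hmK
  have : IsFiniteMeasure (geometricCount fun n => Dp n ∪ Dm n) :=
    isFiniteMeasure_geometricCount (N := d + (d + 1)) fun n => by
      rw [hDp, hDm, Nat.cast_add]
      refine (encard_union_le _ _).trans (add_le_add ?_ ?_)
      · exact (encard_image_le _ _).trans
          ((encard_le_encard sdiff_subset).trans (encard_range_fin_le _))
      · refine (encard_image_le _ _).trans ((encard_le_encard ?_).trans (encard_range_fin_le x))
        rintro _ ⟨j, -, -, rfl⟩
        exact mem_range_self j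
  have hF0 : F 0 ≠ 0 := fun h => by
    obtain ⟨n, hn⟩ := hmin 0 (by simp) (1 / 2) (by norm_num) (1 / 2) (by norm_num)
    rw [Function.iterate_fixed h] at hn
    norm_num at hn
  have hpos : ∀ u v : ℝ, 0 ≤ u → u < v → v ≤ 1 →
      0 < geometricCount (fun n => Dp n ∪ Dm n) (Ioo u v) := fun u v hu huv hv => by
    obtain ⟨n, hn⟩ :=
      exists_mem_Ioo_of_forall_dist_lt (hmin (F 0) (hbij.mapsTo (by simp))) hu huv hv
    refine geometricCount_pos_of_mem measurableSet_Ioo (n := n) ⟨Or.inl ?_, hn⟩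
    exact hDp n ▸ mem_image_of_mem _ ⟨⟨⟨0, hd⟩, by rw [← hx0]; rfl⟩, hF0⟩
  have hl_mono : StrictMonoOn l (Icc 0 1) := funext hl ▸ strictMonoOn_measure_Ico_toReal hpos
  have hr_mono : StrictMonoOn r (Icc 0 1) := funext hr ▸ strictMonoOn_measure_Icc_toReal hpos
  have hl_meas : Measurable l := funext hl ▸ (monotone_measure_Ico_toReal _ 0).measurable
  have hr_meas : Measurable r := funext hr ▸ (monotone_measure_Icc_toReal _ 0).measurable
  have hK : MeasurableSet (l '' Ioc 0 1 ∪ r '' Ico 0 1) :=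
    (measurableSet_Ioc.image_of_measurable_injOn hl_meas
      (hl_mono.injOn.mono Ioc_subset_Icc_self)).union
    (measurableSet_Ico.image_of_measurable_injOn hr_meas (hr_mono.injOn.mono Ico_subset_Icc_self))
  choose c hc using htrans
  have hF : ∀ S, MeasurableSet S →
      volume.restrict (Ico 0 1) (F ⁻¹' S) = volume.restrict (Ico 0 1) S := fun S hS =>
    measure_restrict_preimage_of_piecewise_add volume hbij
      (by rw [Fin.iUnion_Ico_castSucc_succ hxmono.monotone, hx0, hxd])
      (Fin.pairwise_disjoint_Ico_castSucc_succ hxmono.monotone) (fun _ => measurableSet_Ico) hc hS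
  have := nullSingletonClass_map_restrict_of_injOn (μ := volume) hl_meas
    (hl_mono.injOn.mono Ico_subset_Icc_self)
  refine ⟨fun y _ => measure_singleton y, fun T hT B hB _ => ?_⟩
  exact map_restrict_image_preimage_eq measurableSet_Ioo Ioo_ae_eq_Ico.symm hl_meas hF hK
    (fun y hy => Or.inl (mem_image_of_mem l (Ioo_subset_Ioc_self hy))) T.measurable hT hB

/-- The pushforward `m_K` of Lebesgue measure on `[0,1)` under `l`
is non-atomic on `K`, and is invariant under any homeomorphism `T : K → K`
satisfying `T(l(x)) = l(F(x))` for all `x ∈ (0,1)`. -/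
theorem statement2 (d : ℕ) (hd : 1 ≤ d) (x : Fin (d + 1) → ℝ)
    (hx0 : x 0 = 0) (hxd : x (Fin.last d) = 1) (hxmono : StrictMono x)
    (F G : ℝ → ℝ)
    (hbij : Set.BijOn F (Set.Ico 0 1) (Set.Ico 0 1))
    (hinv : Set.InvOn G F (Set.Ico 0 1) (Set.Ico 0 1))
    (htrans : ∀ i : Fin d, ∃ c : ℝ,
      ∀ y ∈ Set.Ico (x i.castSucc) (x i.succ), F y = y + c)
    (hKeane : ∀ i : Fin d, ∀ n : ℕ, 1 ≤ n →
      F^[n] (x i.castSucc) ∉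
        {y : ℝ | ∃ j : Fin (d + 1), j ≠ 0 ∧ j ≠ Fin.last d ∧ y = x j})
    (hmin : ∀ y ∈ Set.Ico (0 : ℝ) 1, ∀ z ∈ Set.Ico (0 : ℝ) 1, ∀ ε > (0 : ℝ),
      ∃ n : ℕ, |F^[n] y - z| < ε)
    (Dp Dm : ℕ → Set ℝ)
    (hDp : ∀ n : ℕ, Dp n =
      F^[n] '' ((Set.range fun i : Fin d => F (x i.castSucc)) \ {0}))
    (hDm : ∀ n : ℕ, Dm n =
      G^[n] '' {y : ℝ | ∃ j : Fin (d + 1), j ≠ 0 ∧ j ≠ Fin.last d ∧ y = x j})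
    (ρ : Measure ℝ)
    (hρ : ρ = Measure.sum fun n : ℕ =>
      ((2 : ENNReal)⁻¹) ^ n • Measure.count.restrict (Dp n ∪ Dm n))
    (l r : ℝ → ℝ)
    (hl : ∀ y : ℝ, l y = (ρ (Set.Ico 0 y)).toReal)
    (hr : ∀ y : ℝ, r y = (ρ (Set.Icc 0 y)).toReal)
    (K : Set ℝ) (hK : K = l '' Set.Ioc 0 1 ∪ r '' Set.Ico 0 1)
    (mK : Measure ℝ)
    (hmK : mK = Measure.map l (volume.restrict (Set.Ico 0 1))) :
    (∀ y ∈ K, mK {y} = 0) ∧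
    (∀ T : K ≃ₜ K,
      (∀ (p : K) (y : ℝ), y ∈ Set.Ioo (0 : ℝ) 1 → (p : ℝ) = l y →
        (T p : ℝ) = l (F y)) →
      ∀ B : Set ℝ, MeasurableSet B → B ⊆ K →
        mK (Subtype.val '' (⇑T ⁻¹' (Subtype.val ⁻¹' B))) = mK B) :=
  statement2_general d hd x hx0 hxd hxmono F G hbij htrans hmin Dp Dm hDp hDm ρ hρ l r hl hr K hK mK
    hmK
end

section
/- In a partially ordered Bratteli diagram, for every non-maximal infinite path p ∈ Σ (i.e. some edge of p is not maximal in its fiber), the set {q ∈ Σ : p < q} has a least element under the lexicographic partial order: there exists q* ∈ Σ with p < q* such that for every q ∈ Σ with p < q, either q = q* or q* < q. Consequently the adic (Vershik) map τ(p) = min{q ∈ Σ : q > p} is well-defined on Σ \ Σ_max. -/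
/-- A partially ordered Bratteli diagram: finite nonempty vertex/edge sets at
each level, surjective source/target maps, and a linear order on each target
fiber, encoded as a relation `elt` comparing only edges with the same target. -/
structure OrderedBratteli where
  V : ℕ → Type
  E : ℕ → Type
  vFinite : ∀ k, Finite (V k)
  eFinite : ∀ k, Finite (E k)
  vNonempty : ∀ k, Nonempty (V k)
  eNonempty : ∀ k, Nonempty (E k)
  src : ∀ k, E k → V k
  tgt : ∀ k, E k → V (k + 1)
  src_surj : ∀ k, Function.Surjective (src k)
  tgt_surj : ∀ k, Function.Surjective (tgt k)
  elt : ∀ k, E k → E k → Prop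
  elt_tgt : ∀ k (e e' : E k), elt k e e' → tgt k e = tgt k e'
  elt_irrefl : ∀ k (e : E k), ¬ elt k e e
  elt_trans : ∀ k (e₁ e₂ e₃ : E k), elt k e₁ e₂ → elt k e₂ e₃ → elt k e₁ e₃
  elt_total : ∀ k (e e' : E k), tgt k e = tgt k e' → e ≠ e' → elt k e e' ∨ elt k e' e

namespace OrderedBratteli

variable (B : OrderedBratteli)

/-- The space `Σ` of infinite admissible paths. -/
def Path : Type := {p : ∀ k, B.E k // ∀ k, B.tgt k (p k) = B.src (k + 1) (p (k + 1))}

/-- An edge is maximal if it is the greatest element of its target fiber. -/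
def MaxEdge (k : ℕ) (e : B.E k) : Prop :=
  ∀ e' : B.E k, B.tgt k e' = B.tgt k e → e' = e ∨ B.elt k e' e

/-- A path is maximal if all of its edges are maximal. -/
def IsMax (p : B.Path) : Prop := ∀ k, B.MaxEdge k (p.1 k)

/-- The lexicographic partial order on paths: `p < q` iff they agree after some
index `K`, differ at `K`, and `p K < q K` in the fiber order. -/
def Plt (p q : B.Path) : Prop :=
  ∃ K : ℕ, (∀ k, K < k → p.1 k = q.1 k) ∧ p.1 K ≠ q.1 K ∧ B.elt K (p.1 K) (q.1 K)

end OrderedBratteli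

namespace OrderedBratteli

lemma finsetMin (B : OrderedBratteli) (k : ℕ) (v : B.V (k + 1))
    (s : Finset (B.E k)) (ht : ∀ e ∈ s, B.tgt k e = v) (hs : s.Nonempty) :
    ∃ m ∈ s, ∀ e ∈ s, e = m ∨ B.elt k m e := by
  classical
  revert ht hs
  induction s using Finset.cons_induction with
  | empty => intro _ hs; simp at hs
  | cons a s ha ih =>
    intro ht _
    rcases s.eq_empty_or_nonempty with rfl | hne
    · refine ⟨a, by simp, ?_⟩
      intro e he
      simp only [Finset.cons_empty, Finset.mem_singleton] at he
      exact Or.inl he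
    · obtain ⟨m, hm, hmin⟩ := ih (fun e he => ht e (Finset.mem_cons_of_mem he)) hne
      have hta : B.tgt k a = B.tgt k m := by
        rw [ht a (Finset.mem_cons_self a s), ht m (Finset.mem_cons_of_mem hm)]
      have hne' : a ≠ m := fun h => ha (h ▸ hm)
      rcases B.elt_total k a m hta hne' with h | h
      · refine ⟨a, Finset.mem_cons_self a s, ?_⟩
        intro e he
        rcases Finset.mem_cons.mp he with rfl | he'
        · exact Or.inl rfl
        · rcases hmin e he' with rfl | h2
          · exact Or.inr h
          · exact Or.inr (B.elt_trans k a m e h h2)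
      · refine ⟨m, Finset.mem_cons_of_mem hm, ?_⟩
        intro e he
        rcases Finset.mem_cons.mp he with rfl | he'
        · exact Or.inr h
        · exact hmin e he'

lemma existsMinFiber (B : OrderedBratteli) (k : ℕ) (v : B.V (k + 1)) :
    ∃ m, B.tgt k m = v ∧ ∀ e, B.tgt k e = v → e = m ∨ B.elt k m e := by
  classical
  haveI : Finite (B.E k) := B.eFinite k
  haveI := Fintype.ofFinite (B.E k)
  obtain ⟨e0, he0⟩ := B.tgt_surj k v
  obtain ⟨m, hm, hmin⟩ := B.finsetMin k v
    (Finset.univ.filter (fun e => B.tgt k e = v))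
    (fun e he => (Finset.mem_filter.mp he).2)
    ⟨e0, Finset.mem_filter.mpr ⟨Finset.mem_univ _, he0⟩⟩
  exact ⟨m, (Finset.mem_filter.mp hm).2,
    fun e he => hmin e (Finset.mem_filter.mpr ⟨Finset.mem_univ _, he⟩)⟩

lemma existsSucc (B : OrderedBratteli) (k : ℕ) (e : B.E k) (he : ¬ B.MaxEdge k e) :
    ∃ f, B.elt k e f ∧ B.tgt k f = B.tgt k e ∧
      ∀ g, B.tgt k g = B.tgt k e → B.elt k e g → g = f ∨ B.elt k f g := by
  classical
  haveI : Finite (B.E k) := B.eFinite k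
  haveI := Fintype.ofFinite (B.E k)
  simp only [MaxEdge, not_forall] at he
  obtain ⟨e', h1, h2⟩ := he
  push_neg at h2
  obtain ⟨hne, hnlt⟩ := h2
  have h4 : B.elt k e e' := (B.elt_total k e' e h1 hne).resolve_left hnlt
  obtain ⟨m, hm, hmin⟩ := B.finsetMin k (B.tgt k e)
    (Finset.univ.filter (fun g => B.tgt k g = B.tgt k e ∧ B.elt k e g))
    (fun g hg => (Finset.mem_filter.mp hg).2.1)
    ⟨e', Finset.mem_filter.mpr ⟨Finset.mem_univ _, h1, h4⟩⟩
  obtain ⟨_, hmt, hml⟩ := Finset.mem_filter.mp hm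
  exact ⟨m, hml, hmt,
    fun g hgt hgl => hmin g (Finset.mem_filter.mpr ⟨Finset.mem_univ _, hgt, hgl⟩)⟩

/-- Build the minimal tail below level `K` feeding into a given edge `f` at
level `K`. -/
noncomputable def build (B : OrderedBratteli) (K : ℕ) (f : B.E K) : (j : ℕ) → B.E j
  | j =>
    if h : j = K then cast (congrArg B.E h.symm) f
    else if h2 : j < K then
      (B.existsMinFiber j (B.src (j + 1) (B.build K f (j + 1)))).choose
    else Classical.choice (B.eNonempty j)
termination_by j => K - j
decreasing_by omega

lemma build_eq_top (B : OrderedBratteli) (K : ℕ) (f : B.E K) : B.build K f K = f := by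
  rw [build]
  simp

lemma build_spec (B : OrderedBratteli) (K : ℕ) (f : B.E K) (j : ℕ) (h : j < K) :
    B.tgt j (B.build K f j) = B.src (j + 1) (B.build K f (j + 1)) ∧
      ∀ e, B.tgt j e = B.src (j + 1) (B.build K f (j + 1)) →
        e = B.build K f j ∨ B.elt j (B.build K f j) e := by
  have heq : B.build K f j
      = (B.existsMinFiber j (B.src (j + 1) (B.build K f (j + 1)))).choose := by
    conv_lhs => rw [build]
    rw [dif_neg (by omega : ¬ j = K), dif_pos h]
  rw [heq]
  exact (B.existsMinFiber j (B.src (j + 1) (B.build K f (j + 1)))).choose_spec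

end OrderedBratteli

/-- For every non-maximal path `p`, the set `{q : p < q}` has a
least element, so the adic (Vershik) map `τ(p) = min{q : q > p}` is
well-defined on `Σ \ Σ_max`. -/
theorem statement5 (B : OrderedBratteli) (p : B.Path) (hp : ¬ B.IsMax p) :
    ∃ qstar : B.Path, B.Plt p qstar ∧
      ∀ q : B.Path, B.Plt p q → q = qstar ∨ B.Plt qstar q := by
  classical
  have hex : ∃ k, ¬ B.MaxEdge k (p.1 k) := by
    by_contra h
    push_neg at h
    exact hp h
  set K := Nat.find hex with hKdef
  have hK : ¬ B.MaxEdge K (p.1 K) := Nat.find_spec hex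
  have hKmin : ∀ j, j < K → B.MaxEdge j (p.1 j) := by
    intro j hj
    have := Nat.find_min hex hj
    simpa using this
  obtain ⟨f, hf_lt, hf_tgt, hf_min⟩ := B.existsSucc K (p.1 K) hK
  -- define qstar
  set qfun : ∀ k, B.E k := fun k => if k ≤ K then B.build K f k else p.1 k with hqdef
  have hq_gt : ∀ k, K < k → qfun k = p.1 k := by
    intro k hk
    simp only [hqdef, if_neg (by omega : ¬ k ≤ K)]
  have hq_le : ∀ k, k ≤ K → qfun k = B.build K f k := by
    intro k hk
    simp only [hqdef, if_pos hk]
  have hqK : qfun K = f := by rw [hq_le K le_rfl, B.build_eq_top]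
  have hadm : ∀ k, B.tgt k (qfun k) = B.src (k + 1) (qfun (k + 1)) := by
    intro k
    rcases lt_trichotomy k K with hk | hk | hk
    · rw [hq_le k (le_of_lt hk), hq_le (k + 1) (by omega)]
      exact (B.build_spec K f k hk).1
    · subst hk
      rw [hqK, hq_gt (K + 1) (by omega), hf_tgt]
      exact p.2 K
    · rw [hq_gt k hk, hq_gt (k + 1) (by omega)]
      exact p.2 k
  refine ⟨⟨qfun, hadm⟩, ?_, ?_⟩
  · refine ⟨K, fun k hk => (hq_gt k hk).symm, ?_, ?_⟩
    · show p.1 K ≠ qfun K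
      rw [hqK]
      intro h
      exact B.elt_irrefl K (p.1 K) (h ▸ hf_lt)
    · show B.elt K (p.1 K) (qfun K)
      rw [hqK]; exact hf_lt
  · rintro q ⟨M, hMgt, hMne, hMlt⟩
    -- M cannot be < K
    have hMK : K ≤ M := by
      by_contra h
      push_neg at h
      have hmax := hKmin M h
      rcases hmax (q.1 M) (B.elt_tgt M (p.1 M) (q.1 M) hMlt).symm with heq | hlt
      · exact hMne heq.symm
      · exact B.elt_irrefl M (p.1 M) (B.elt_trans M _ _ _ hMlt hlt)
    rcases eq_or_lt_of_le hMK with hMK' | hMK'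
    · -- M = K
      subst hMK'
      have hqtgt : B.tgt K (q.1 K) = B.tgt K (p.1 K) :=
        (B.elt_tgt K (p.1 K) (q.1 K) hMlt).symm
      rcases hf_min (q.1 K) hqtgt hMlt with hqf | hflt
      · -- q agrees with qstar at level K and above; compare below
        by_cases hall : ∀ k, q.1 k = qfun k
        · left
          exact Subtype.ext (funext hall)
        · right
          push_neg at hall
          obtain ⟨k0, hk0⟩ := hall
          set P : ℕ → Prop := fun k => q.1 k ≠ qfun k with hPdef
          have hqfK : q.1 K = qfun K := by rw [hqK]; exact hqf
          have hk0M : k0 < K := by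
            rcases lt_trichotomy k0 K with h | h | h
            · exact h
            · exfalso; exact hk0 (h ▸ hqfK)
            · exfalso; exact hk0 ((hMgt k0 h).symm.trans (hq_gt k0 h).symm)
          set L := Nat.findGreatest P K with hLdef
          have hPL : P L := Nat.findGreatest_spec (m := k0) (le_of_lt hk0M) hk0
          have hLM : L < K := by
            have hle : L ≤ K := Nat.findGreatest_le K
            rcases eq_or_lt_of_le hle with h | h
            · exact absurd (h ▸ hqfK) hPL
            · exact h
          have hgtL : ∀ k, L < k → q.1 k = qfun k := by
            intro k hk
            by_cases hkM : k ≤ K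
            · by_contra hne
              exact Nat.findGreatest_is_greatest hk hkM hne
            · push_neg at hkM
              rw [hq_gt k hkM]
              exact (hMgt k hkM).symm
          refine ⟨L, ?_, ?_, ?_⟩
          · intro k hk
            show qfun k = q.1 k
            exact (hgtL k hk).symm
          · show qfun L ≠ q.1 L
            exact fun h => hPL h.symm
          · show B.elt L (qfun L) (q.1 L)
            have hspec := B.build_spec K f L hLM
            have hLq : B.tgt L (q.1 L) = B.src (L + 1) (B.build K f (L + 1)) := by
              rw [← hq_le (L + 1) (by omega), ← hgtL (L + 1) (by omega)]
              exact q.2 L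
            rw [hq_le L (le_of_lt hLM)]
            rcases hspec.2 (q.1 L) hLq with heq | hlt
            · exact absurd (heq.trans (hq_le L (le_of_lt hLM)).symm) hPL
            · exact hlt
      · -- q K strictly above f
        right
        refine ⟨K, ?_, ?_, ?_⟩
        · intro k hk
          show qfun k = q.1 k
          rw [hq_gt k hk]
          exact hMgt k hk
        · show qfun K ≠ q.1 K
          rw [hqK]
          intro h
          exact B.elt_irrefl K f (h ▸ hflt)
        · show B.elt K (qfun K) (q.1 K)
          rw [hqK]; exact hflt
    · -- K < M
      right
      refine ⟨M, ?_, ?_, ?_⟩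
      · intro k hk
        show qfun k = q.1 k
        rw [hq_gt k (by omega)]
        exact hMgt k hk
      · show qfun M ≠ q.1 M
        rw [hq_gt M hMK']
        exact hMne
      · show B.elt M (qfun M) (q.1 M)
        rw [hq_gt M hMK']
        exact hMlt
end

section
/- In a stationary ordered Bratteli diagram, let G be an abelian group, f : Σ → G a function, and φ_f the tail cocycle. Let Σ⁰ = Σ \ (⋃_{n≥0} τ⁻ⁿ(Σ_max) ∪ ⋃_{n≥0} τⁿ(Σ_min)), on which τ restricts to a bijection. Define the skew-products τ_{φ_f}(p,a) = (τ(p), a + φ_f(p)) on Σ⁰ × G and σ_f(p,a) = (σ(p), a + f(p)) on Σ × G. Then for all p, p′ ∈ Σ⁰ and a, a′ ∈ G the following are equivalent: (i) (p,a) and (p′,a′) lie in the same τ_{φ_f}-orbit, i.e. there exists n ≥ 0 with τ_{φ_f}ⁿ(p,a) = (p′,a′) or τ_{φ_f}ⁿ(p′,a′) = (p,a); (ii) (p,a) and (p′,a′) are tail-equivalent for σ_f, i.e. there exists N ≥ 0 with σ_fᴺ(p,a) = σ_fᴺ(p′,a′), equivalently σᴺ(p) = σᴺ(p′) and a + Σ_{k=0}^{N−1}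 f(σᵏ(p)) = a′ + Σ_{k=0}^{N−1} f(σᵏ(p′)). -/
/-- A stationary ordered Bratteli diagram: a finite nonempty vertex set `V` and
edge set `E`, surjective source/target maps, and a linear order on each target
fiber, encoded as a relation `elt` comparing only edges with the same target. -/
structure SBDiagram where
  V : Type
  E : Type
  vFinite : Finite V
  eFinite : Finite E
  vNonempty : Nonempty V
  eNonempty : Nonempty E
  src : E → V
  tgt : E → V
  src_surj : Function.Surjective src
  tgt_surj : Function.Surjective tgt
  elt : E → E → Prop
  elt_tgt : ∀ {e e' : E}, elt e e' → tgt e = tgt e'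
  elt_irrefl : ∀ e : E, ¬ elt e e
  elt_trans : ∀ {e₁ e₂ e₃ : E}, elt e₁ e₂ → elt e₂ e₃ → elt e₁ e₃
  elt_total : ∀ {e e' : E}, tgt e = tgt e' → e ≠ e' → elt e e' ∨ elt e' e

namespace SBDiagram

variable (B : SBDiagram)

/-- Admissibility of an edge sequence: consecutive edges are composable. -/
def Admissible (p : ℕ → B.E) : Prop :=
  ∀ k : ℕ, B.tgt (p k) = B.src (p (k + 1))

/-- The path space `Σ` of infinite admissible paths. -/
def Path : Type := {p : ℕ → B.E // B.Admissible p}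

/-- An edge is maximal if it is the greatest element of its target fiber. -/
def MaxEdge (e : B.E) : Prop :=
  ∀ e' : B.E, B.tgt e' = B.tgt e → e' = e ∨ B.elt e' e

/-- An edge is minimal if it is the least element of its target fiber. -/
def MinEdge (e : B.E) : Prop :=
  ∀ e' : B.E, B.tgt e' = B.tgt e → e' = e ∨ B.elt e e'

/-- A maximal path: all its edges are maximal (`p ∈ Σ_max`). -/
def IsMax (p : B.Path) : Prop := ∀ k : ℕ, B.MaxEdge (p.1 k)

/-- A minimal path: all its edges are minimal (`p ∈ Σ_min`). -/
def IsMin (p : B.Path) : Prop := ∀ k : ℕ, B.MinEdge (p.1 k)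

/-- The left shift `σ : Σ → Σ`. -/
def shift (p : B.Path) : B.Path :=
  ⟨fun k => p.1 (k + 1), fun k => p.2 (k + 1)⟩

/-- `IsTauPair p q` says `q` is the image of `p` under the adic (Vershik) map:
if `n` is the least index at which `p` is not maximal, then `q` agrees with `p`
beyond `n`, `q n` is the least element of the fiber of `p n` greater than
`p n`, and `q k` is the least element of its fiber for all `k < n`. -/
def IsTauPair (p q : B.Path) : Prop :=
  ∃ n : ℕ,
    (∀ k < n, B.MaxEdge (p.1 k)) ∧
    ¬ B.MaxEdge (p.1 n) ∧
    (∀ k, n < k → q.1 k = p.1 k) ∧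
    (B.tgt (q.1 n) = B.tgt (p.1 n) ∧ B.elt (p.1 n) (q.1 n) ∧
      ∀ e : B.E, B.tgt e = B.tgt (p.1 n) → B.elt (p.1 n) e →
        e = q.1 n ∨ B.elt (q.1 n) e) ∧
    (∀ k < n, ∀ e : B.E, B.tgt e = B.tgt (q.1 k) → e = q.1 k ∨ B.elt (q.1 k) e)

/-- The adic (Vershik) map `τ` on `Σ`; on a non-maximal path it produces the
successor path (this always exists and is unique), and on maximal paths (where
the adic map is undefined) it is the identity by convention. -/
noncomputable def tau (p : B.Path) : B.Path :=
  letI := Classical.propDecidable (∃ q : B.Path, B.IsTauPair p q)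
  if h : ∃ q : B.Path, B.IsTauPair p q then h.choose else p

/-! ### Auxiliary lemmas -/

lemma path_ext {p q : B.Path} (h : ∀ k, p.1 k = q.1 k) : p = q :=
  Subtype.ext (funext h)

lemma shift_iter (N : ℕ) (p : B.Path) (k : ℕ) :
    (B.shift^[N] p).1 k = p.1 (k + N) := by
  induction N generalizing p k with
  | zero => rfl
  | succ N ih =>
      rw [Function.iterate_succ_apply, ih]
      rfl

lemma elt_wf : WellFounded B.elt := by
  haveI := B.eFinite
  haveI : IsTrans B.E B.elt := ⟨fun _ _ _ => B.elt_trans⟩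
  haveI : IsIrrefl B.E B.elt := ⟨B.elt_irrefl⟩
  exact Finite.wellFounded_of_trans_of_irrefl _

lemma exists_least {S : Set B.E} (hS : S.Nonempty) (v : B.V)
    (hv : ∀ e ∈ S, B.tgt e = v) :
    ∃ m ∈ S, ∀ e ∈ S, e = m ∨ B.elt m e := by
  obtain ⟨m, hm, hmin⟩ := B.elt_wf.has_min S hS
  refine ⟨m, hm, fun e he => ?_⟩
  by_cases h : e = m
  · exact Or.inl h
  · rcases B.elt_total ((hv e he).trans (hv m hm).symm) h with h1 | h1
    · exact absurd h1 (hmin e he)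
    · exact Or.inr h1

noncomputable def minEdge (v : B.V) : B.E :=
  (B.exists_least (S := {e | B.tgt e = v}) (B.tgt_surj v) v (fun _ he => he)).choose

lemma minEdge_tgt (v : B.V) : B.tgt (B.minEdge v) = v :=
  (B.exists_least (S := {e | B.tgt e = v}) (B.tgt_surj v) v (fun _ he => he)).choose_spec.1

lemma minEdge_least (v : B.V) :
    ∀ e, B.tgt e = v → e = B.minEdge v ∨ B.elt (B.minEdge v) e :=
  (B.exists_least (S := {e | B.tgt e = v}) (B.tgt_surj v) v (fun _ he => he)).choose_spec.2

/-- Descending sequence of minimal edges below a given edge. -/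
noncomputable def down (e : B.E) (j : ℕ) : B.E :=
  Nat.rec e (fun _ d => B.minEdge (B.src d)) j

lemma down_zero (e : B.E) : B.down e 0 = e := rfl

lemma down_succ (e : B.E) (j : ℕ) :
    B.down e (j + 1) = B.minEdge (B.src (B.down e j)) := rfl

lemma exists_tauPair {p : B.Path} (h : ¬ B.IsMax p) : ∃ q, B.IsTauPair p q := by
  classical
  have hex : ∃ k, ¬ B.MaxEdge (p.1 k) := by
    by_contra hc
    push_neg at hc
    exact h hc
  obtain ⟨n, hnmax, hlt⟩ : ∃ n, ¬ B.MaxEdge (p.1 n) ∧ ∀ k < n, B.MaxEdge (p.1 k) :=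
    ⟨Nat.find hex, Nat.find_spec hex, fun k hk => not_not.1 (Nat.find_min hex hk)⟩
  -- the successor edge at level n
  have hSne : ∃ e, B.tgt e = B.tgt (p.1 n) ∧ B.elt (p.1 n) e := by
    rw [MaxEdge] at hnmax
    push_neg at hnmax
    obtain ⟨e, he1, he2, he3⟩ := hnmax
    rcases B.elt_total he1.symm (fun hh => he2 hh.symm) with h1 | h1
    · exact ⟨e, he1, h1⟩
    · exact absurd h1 he3
  obtain ⟨m, hm, hmle⟩ := B.exists_least (S := {e | B.tgt e = B.tgt (p.1 n) ∧ B.elt (p.1 n) e})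
    hSne (B.tgt (p.1 n)) (fun e he => he.1)
  set qs : ℕ → B.E := fun k => if k ≤ n then B.down m (n - k) else p.1 k with hqs
  have hq_gt : ∀ k, n < k → qs k = p.1 k := fun k hk => if_neg (by omega)
  have hq_n : qs n = m := by
    have h0 : qs n = if n ≤ n then B.down m (n - n) else p.1 n := rfl
    rw [h0, if_pos le_rfl, Nat.sub_self, B.down_zero]
  have hq_lt : ∀ k < n, qs k = B.minEdge (B.src (B.down m (n - k - 1))) := by
    intro k hk
    obtain ⟨j, hj, hj'⟩ : ∃ j, n - k = j + 1 ∧ j = n - k - 1 := ⟨n - k - 1, by omega, rfl⟩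
    have h0 : qs k = B.down m (n - k) := if_pos (le_of_lt hk)
    rw [h0, ← hj', hj, B.down_succ]
  have hadm : B.Admissible qs := by
    intro k
    rcases lt_trichotomy k n with hk | hk | hk
    · rw [hq_lt k hk]
      rcases Nat.lt_or_ge (k+1) n with hk1 | hk1
      · rw [hq_lt (k+1) hk1, B.minEdge_tgt]
        have h2 : n - k - 1 = n - (k+1) - 1 + 1 := by omega
        rw [h2, B.down_succ]
      · have hk1' : k + 1 = n := by omega
        rw [hk1', hq_n, B.minEdge_tgt]
        have h2 : n - k - 1 = 0 := by omega
        rw [h2, B.down_zero]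
    · subst hk
      rw [hq_n, hq_gt (k+1) (by omega), hm.1]
      exact p.2 k
    · rw [hq_gt k hk, hq_gt (k+1) (by omega)]
      exact p.2 k
  refine ⟨⟨qs, hadm⟩, n, hlt, hnmax, hq_gt, ⟨?_, ?_, ?_⟩, ?_⟩
  · show B.tgt (qs n) = B.tgt (p.1 n)
    rw [hq_n]; exact hm.1
  · show B.elt (p.1 n) (qs n)
    rw [hq_n]; exact hm.2
  · intro e he1 he2
    show e = qs n ∨ B.elt (qs n) e
    rw [hq_n]
    exact hmle e ⟨he1, he2⟩
  · intro k hk e he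
    replace he : B.tgt e = B.tgt (qs k) := he
    show e = qs k ∨ B.elt (qs k) e
    rw [hq_lt k hk] at he ⊢
    apply B.minEdge_least
    rw [he, B.minEdge_tgt]

lemma tau_spec {p : B.Path} (h : ¬ B.IsMax p) : B.IsTauPair p (B.tau p) := by
  unfold tau
  split
  next h' => exact h'.choose_spec
  next h' => exact absurd (B.exists_tauPair h) h'

/-- Strict adic (reverse-lexicographic) order on paths. -/
def Lt (q r : B.Path) : Prop :=
  ∃ k, B.elt (q.1 k) (r.1 k) ∧ ∀ j, k < j → q.1 j = r.1 j

lemma lt_not_max {q r : B.Path} (h : B.Lt q r) : ¬ B.IsMax q := by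
  obtain ⟨k, hk, _⟩ := h
  intro hmax
  rcases hmax k (r.1 k) (B.elt_tgt hk).symm with h1 | h1
  · exact B.elt_irrefl _ (h1 ▸ hk)
  · exact B.elt_irrefl _ (B.elt_trans hk h1)

lemma step {q r q' : B.Path} (hqr : B.Lt q r) (h : B.IsTauPair q q') :
    B.Lt q q' ∧ (q' = r ∨ B.Lt q' r) := by
  obtain ⟨k, hk, hk2⟩ := hqr
  obtain ⟨n, hmax, hnmax, hgt, ⟨htgt, helt, hsucc⟩, hminlt⟩ := h
  have hLt : B.Lt q q' := ⟨n, helt, fun j hj => (hgt j hj).symm⟩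
  refine ⟨hLt, ?_⟩
  have hnk : n ≤ k := by
    by_contra hc
    push_neg at hc
    rcases hmax k hc (r.1 k) (B.elt_tgt hk).symm with h1 | h1
    · exact B.elt_irrefl _ (h1 ▸ hk)
    · exact B.elt_irrefl _ (B.elt_trans hk h1)
  rcases Nat.lt_or_ge n k with hnk' | hnk'
  · -- n < k : q' agrees with q at k and above
    right
    refine ⟨k, ?_, fun j hj => ?_⟩
    · rw [hgt k hnk']; exact hk
    · rw [hgt j (lt_trans hnk' hj)]; exact hk2 j hj
  · have hkn : n = k := by omega
    subst hkn
    rcases hsucc (r.1 n) (B.elt_tgt hk).symm hk with h1 | h1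
    · -- q' n = r n ; compare below n
      by_cases hD : ∃ j, j < n ∧ q'.1 j ≠ r.1 j
      · right
        classical
        set D := (Finset.range n).filter (fun j => q'.1 j ≠ r.1 j) with hD'
        have hDne : D.Nonempty := by
          obtain ⟨j, hj1, hj2⟩ := hD
          exact ⟨j, by simp [hD', Finset.mem_filter, Finset.mem_range, hj1, hj2]⟩
        set j := D.max' hDne with hj
        have hjD : j ∈ D := D.max'_mem hDne
        have hjn : j < n := (Finset.mem_range.1 (Finset.mem_filter.1 hjD).1)
        have hjne : q'.1 j ≠ r.1 j := (Finset.mem_filter.1 hjD).2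
        have hab : ∀ i, j < i → q'.1 i = r.1 i := by
          intro i hi
          rcases lt_trichotomy i n with h2 | h2 | h2
          · by_contra hc
            have : i ∈ D := Finset.mem_filter.2 ⟨Finset.mem_range.2 h2, hc⟩
            exact absurd (D.le_max' i this) (by omega)
          · subst h2; exact h1.symm
          · rw [hgt i h2]; exact hk2 i h2
        have htgtj : B.tgt (q'.1 j) = B.tgt (r.1 j) := by
          have h3 : B.tgt (q'.1 j) = B.src (q'.1 (j+1)) := q'.2 j
          have h4 : B.tgt (r.1 j) = B.src (r.1 (j+1)) := r.2 j
          rw [h3, h4, hab (j+1) (by omega)]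
        rcases hminlt j hjn (r.1 j) htgtj.symm with h2 | h2
        · exact absurd h2.symm hjne
        · exact ⟨j, h2, hab⟩
      · left
        push_neg at hD
        apply B.path_ext
        intro i
        rcases lt_trichotomy i n with h2 | h2 | h2
        · exact hD i h2
        · subst h2; exact h1.symm
        · rw [hgt i h2]; exact hk2 i h2
    · -- elt (q' n) (r n)
      right
      refine ⟨n, h1, fun j hj => ?_⟩
      rw [hgt j hj]; exact hk2 j hj

/-- The order `Lt` on finite configurations of edges. -/
def LtF (N : ℕ) (u v : Fin N → B.E) : Prop :=
  ∃ k, B.elt (u k) (v k) ∧ ∀ j, k < j → u j = v j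

lemma ltF_irrefl (N : ℕ) (u : Fin N → B.E) : ¬ B.LtF N u u := by
  rintro ⟨k, hk, -⟩
  exact B.elt_irrefl _ hk

lemma ltF_trans {N : ℕ} {u v w : Fin N → B.E} (h1 : B.LtF N u v) (h2 : B.LtF N v w) :
    B.LtF N u w := by
  obtain ⟨k1, hk1, hk1'⟩ := h1
  obtain ⟨k2, hk2, hk2'⟩ := h2
  rcases lt_trichotomy k1 k2 with h | h | h
  · refine ⟨k2, ?_, fun j hj => ?_⟩
    · rw [← hk1' k2 h] at hk2; exact hk2
    · rw [hk1' j (lt_trans h hj), hk2' j hj]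
  · subst h
    exact ⟨k1, B.elt_trans hk1 hk2, fun j hj => (hk1' j hj).trans (hk2' j hj)⟩
  · refine ⟨k1, ?_, fun j hj => ?_⟩
    · rw [hk2' k1 h] at hk1; exact hk1
    · rw [hk1' j hj, hk2' j (lt_trans h hj)]

/-- Measure used for the termination of the adic iteration. -/
noncomputable def meas (N : ℕ) (q : B.Path) : ℕ :=
  letI : Finite B.E := B.eFinite
  letI := Fintype.ofFinite B.E
  letI := Classical.decPred (fun v : Fin N → B.E => B.LtF N (fun i => q.1 i) v)
  (Finset.univ.filter (fun v : Fin N → B.E => B.LtF N (fun i => q.1 i) v)).card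

lemma lt_to_ltF {N : ℕ} {q r : B.Path} (hagree : ∀ k, N ≤ k → q.1 k = r.1 k)
    (h : B.Lt q r) : B.LtF N (fun i => q.1 i) (fun i => r.1 i) := by
  obtain ⟨k, hk, hk'⟩ := h
  have hkN : k < N := by
    by_contra hc
    push_neg at hc
    rw [hagree k hc] at hk
    exact B.elt_irrefl _ hk
  exact ⟨⟨k, hkN⟩, hk, fun j hj => hk' j hj⟩

lemma meas_lt {N : ℕ} {q r : B.Path}
    (h : B.LtF N (fun i => q.1 i) (fun i => r.1 i)) :
    B.meas N r < B.meas N q := by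
  classical
  unfold meas
  apply Finset.card_lt_card
  rw [Finset.ssubset_iff_of_subset]
  · refine ⟨fun i => r.1 i, ?_, ?_⟩
    · simp only [Finset.mem_filter, Finset.mem_univ, true_and]
      exact h
    · simp only [Finset.mem_filter, Finset.mem_univ, true_and]
      exact B.ltF_irrefl N _
  · intro v hv
    simp only [Finset.mem_filter, Finset.mem_univ, true_and] at hv ⊢
    exact B.ltF_trans h hv

lemma reach (N : ℕ) (r : B.Path) :
    ∀ m : ℕ, ∀ q : B.Path, (∀ k, N ≤ k → q.1 k = r.1 k) →
      B.meas N q ≤ m → (q = r ∨ B.Lt q r) → ∃ n, B.tau^[n] q = r := by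
  intro m
  induction m with
  | zero =>
      intro q hagree hm hqr
      rcases hqr with h | h
      · exact ⟨0, h⟩
      · exfalso
        have := B.meas_lt (B.lt_to_ltF hagree h)
        omega
  | succ m ih =>
      intro q hagree hm hqr
      rcases hqr with h | h
      · exact ⟨0, h⟩
      · have hnm : ¬ B.IsMax q := B.lt_not_max h
        have hpair := B.tau_spec hnm
        obtain ⟨hLt, hqr'⟩ := B.step h hpair
        obtain ⟨k, hk, hk'⟩ := h
        have hkN : k < N := by
          by_contra hc
          push_neg at hc
          rw [hagree k hc] at hk
          exact B.elt_irrefl _ hk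
        obtain ⟨n, hmax, hnmax, hgt, -, -⟩ := hpair
        have hnk : n ≤ k := by
          by_contra hc
          push_neg at hc
          rcases hmax k hc (r.1 k) (B.elt_tgt hk).symm with h1 | h1
          · exact B.elt_irrefl _ (h1 ▸ hk)
          · exact B.elt_irrefl _ (B.elt_trans hk h1)
        have hagree' : ∀ j, N ≤ j → (B.tau q).1 j = r.1 j := by
          intro j hj
          rw [hgt j (by omega)]
          exact hagree j hj
        have hagree2 : ∀ j, N ≤ j → q.1 j = (B.tau q).1 j :=
          fun j hj => (hgt j (by omega)).symm
        have hmeas : B.meas N (B.tau q) < B.meas N q :=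
          B.meas_lt (B.lt_to_ltF hagree2 hLt)
        obtain ⟨n', hn'⟩ := ih (B.tau q) hagree' (by omega) hqr'
        exact ⟨n' + 1, by rw [Function.iterate_succ_apply, hn']⟩

lemma tail_to_orbit {p p' : B.Path} (N : ℕ) (h : ∀ k, N ≤ k → p.1 k = p'.1 k) :
    ∃ n, B.tau^[n] p = p' ∨ B.tau^[n] p' = p := by
  classical
  by_cases hpp : p = p'
  · exact ⟨0, Or.inl hpp⟩
  · have hD : ∃ kk, kk ∈ (Finset.range N).filter (fun k => p.1 k ≠ p'.1 k) := by
      by_contra hc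
      push_neg at hc
      apply hpp
      apply B.path_ext
      intro k
      rcases Nat.lt_or_ge k N with hk | hk
      · by_contra hne
        exact hc k (Finset.mem_filter.2 ⟨Finset.mem_range.2 hk, hne⟩)
      · exact h k hk
    set D := (Finset.range N).filter (fun k => p.1 k ≠ p'.1 k) with hD'
    have hDne : D.Nonempty := hD
    set k := D.max' hDne with hk
    have hkD : k ∈ D := D.max'_mem hDne
    have hkN : k < N := Finset.mem_range.1 (Finset.mem_filter.1 hkD).1
    have hkne : p.1 k ≠ p'.1 k := (Finset.mem_filter.1 hkD).2
    have hab : ∀ j, k < j → p.1 j = p'.1 j := by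
      intro j hj
      rcases Nat.lt_or_ge j N with h2 | h2
      · by_contra hc
        have : j ∈ D := Finset.mem_filter.2 ⟨Finset.mem_range.2 h2, hc⟩
        exact absurd (D.le_max' j this) (by omega)
      · exact h j h2
    have htgtk : B.tgt (p.1 k) = B.tgt (p'.1 k) := by
      have h3 : B.tgt (p.1 k) = B.src (p.1 (k+1)) := p.2 k
      have h4 : B.tgt (p'.1 k) = B.src (p'.1 (k+1)) := p'.2 k
      rw [h3, h4, hab (k+1) (by omega)]
    rcases B.elt_total htgtk hkne with h1 | h1
    · obtain ⟨n, hn⟩ := B.reach N p' (B.meas N p) p h le_rfl (Or.inr ⟨k, h1, hab⟩)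
      exact ⟨n, Or.inl hn⟩
    · obtain ⟨n, hn⟩ := B.reach N p (B.meas N p') p'
        (fun j hj => (h j hj).symm) le_rfl (Or.inr ⟨k, h1, fun j hj => (hab j hj).symm⟩)
      exact ⟨n, Or.inr hn⟩

lemma sigma_iter {G : Type*} [AddCommGroup G] (f : B.Path → G) (N : ℕ) (p : B.Path) (a : G) :
    (fun x : B.Path × G => (B.shift x.1, x.2 + f x.1))^[N] (p, a)
      = (B.shift^[N] p, a + ∑ i ∈ Finset.range N, f (B.shift^[i] p)) := by
  induction N with
  | zero => simp
  | succ N ih =>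
      rw [Function.iterate_succ_apply', ih]
      show (B.shift (B.shift^[N] p),
          (a + ∑ i ∈ Finset.range N, f (B.shift^[i] p)) + f (B.shift^[N] p)) = _
      rw [← Function.iterate_succ_apply' B.shift, Finset.sum_range_succ, add_assoc]

lemma tau_tailEq {G : Type*} [AddCommGroup G] (f φf : B.Path → G)
    (hφf : ∀ (p : B.Path) (N : ℕ), B.shift^[N] p = B.shift^[N] (B.tau p) →
      φf p = ∑ i ∈ Finset.range N, (f (B.shift^[i] p) - f (B.shift^[i] (B.tau p))))
    {q : B.Path} (hq : ¬ B.IsMax q) (c : G) :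
    ∃ N, (fun x : B.Path × G => (B.shift x.1, x.2 + f x.1))^[N] (B.tau q, c + φf q)
        = (fun x : B.Path × G => (B.shift x.1, x.2 + f x.1))^[N] (q, c) := by
  obtain ⟨n, -, -, hgt, -, -⟩ := B.tau_spec hq
  refine ⟨n + 1, ?_⟩
  have hsh : B.shift^[n+1] q = B.shift^[n+1] (B.tau q) := by
    apply B.path_ext
    intro k
    rw [B.shift_iter, B.shift_iter]
    exact (hgt (k + (n+1)) (by omega)).symm
  rw [B.sigma_iter, B.sigma_iter, ← hsh]
  refine Prod.ext rfl ?_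
  show c + φf q + ∑ i ∈ Finset.range (n+1), f (B.shift^[i] (B.tau q))
      = c + ∑ i ∈ Finset.range (n+1), f (B.shift^[i] q)
  rw [hφf q (n+1) hsh, Finset.sum_sub_distrib]
  abel

end SBDiagram

/-- On `Σ⁰ × G`, the orbit equivalence relation of the
skew-product `τ_{φ_f}` over the adic map coincides with the tail equivalence
relation of the skew-product `σ_f` over the shift.
Here `φf` is the tail cocycle of `f`, given by its defining property. -/
theorem statement9 (B : SBDiagram) {G : Type*} [AddCommGroup G]
    (f : B.Path → G) (φf : B.Path → G)
    (hφf : ∀ (p : B.Path) (N : ℕ), B.shift^[N] p = B.shift^[N] (B.tau p) →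
      φf p = ∑ i ∈ Finset.range N, (f (B.shift^[i] p) - f (B.shift^[i] (B.tau p))))
    (Sigma0 : Set B.Path)
    (hSigma0 : Sigma0 = {p : B.Path |
      (∀ n : ℕ, ¬ B.IsMax (B.tau^[n] p)) ∧
      (∀ n : ℕ, ∀ q : B.Path, B.IsMin q → B.tau^[n] q ≠ p)})
    (τφf σf : B.Path × G → B.Path × G)
    (hτφf : τφf = fun x => (B.tau x.1, x.2 + φf x.1))
    (hσf : σf = fun x => (B.shift x.1, x.2 + f x.1))
    (p p' : B.Path) (hp : p ∈ Sigma0) (hp' : p' ∈ Sigma0) (a a' : G) :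
    (∃ n : ℕ, τφf^[n] (p, a) = (p', a') ∨ τφf^[n] (p', a') = (p, a)) ↔
      (∃ N : ℕ, σf^[N] (p, a) = σf^[N] (p', a')) := by
  subst hτφf hσf hSigma0
  obtain ⟨hpmax, -⟩ := hp
  obtain ⟨hp'max, -⟩ := hp'
  set S : B.Path × G → B.Path × G := fun x => (B.shift x.1, x.2 + f x.1) with hS
  set T : B.Path × G → B.Path × G := fun x => (B.tau x.1, x.2 + φf x.1) with hT
  have hmono : ∀ (x y : B.Path × G) (N M : ℕ), N ≤ M →
      S^[N] x = S^[N] y → S^[M] x = S^[M] y := by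
    intro x y N M hNM hxy
    have h1 : M = (M - N) + N := by omega
    rw [h1, Function.iterate_add_apply, Function.iterate_add_apply, hxy]
  have key : ∀ (p₀ : B.Path), (∀ n, ¬ B.IsMax (B.tau^[n] p₀)) → ∀ (a₀ : G) (n : ℕ),
      ∃ b N, T^[n] (p₀, a₀) = (B.tau^[n] p₀, b) ∧
        S^[N] (B.tau^[n] p₀, b) = S^[N] (p₀, a₀) := by
    intro p₀ hm a₀ n
    induction n with
    | zero => exact ⟨a₀, 0, rfl, rfl⟩
    | succ n ih =>
        obtain ⟨b, N, hEq, hR⟩ := ih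
        obtain ⟨M, hM⟩ := B.tau_tailEq f φf hφf (hm n) b
        rw [← hS] at hM
        refine ⟨b + φf (B.tau^[n] p₀), max M N, ?_, ?_⟩
        · rw [Function.iterate_succ_apply', hEq, Function.iterate_succ_apply' B.tau, hT]
        · rw [Function.iterate_succ_apply' B.tau]
          exact (hmono _ _ M (max M N) (le_max_left _ _) hM).trans
            (hmono _ _ N (max M N) (le_max_right _ _) hR)
  constructor
  · rintro ⟨n, hcase | hcase⟩
    · obtain ⟨b, N, hEq, hR⟩ := key p hpmax a n
      rw [hcase] at hEq
      exact ⟨N, by rw [hEq]; exact hR.symm⟩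
    · obtain ⟨b, N, hEq, hR⟩ := key p' hp'max a' n
      rw [hcase] at hEq
      exact ⟨N, by rw [hEq]; exact hR⟩
  · rintro ⟨N, hN⟩
    have hN' := hN
    rw [hS, B.sigma_iter, B.sigma_iter] at hN'
    have h1 : B.shift^[N] p = B.shift^[N] p' := congrArg Prod.fst hN'
    have htail : ∀ k, N ≤ k → p.1 k = p'.1 k := by
      intro k hk
      have h2 := congrFun (congrArg Subtype.val h1) (k - N)
      rw [B.shift_iter, B.shift_iter] at h2
      have hkN : k - N + N = k := by omega
      rw [hkN] at h2
      exact h2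
    obtain ⟨n, hn | hn⟩ := B.tail_to_orbit N htail
    · obtain ⟨b, M, hEq, hR⟩ := key p hpmax a n
      rw [hn] at hEq hR
      have hSM : S^[max M N] (p', b) = S^[max M N] (p', a') :=
        (hmono _ _ M _ (le_max_left _ _) hR).trans
          (hmono _ _ N _ (le_max_right _ _) hN)
      have hb : b = a' := by
        rw [hS, B.sigma_iter, B.sigma_iter] at hSM
        rw [Prod.ext_iff] at hSM
        exact add_right_cancel hSM.2
      exact ⟨n, Or.inl (by rw [hEq, hb])⟩
    · obtain ⟨b, M, hEq, hR⟩ := key p' hp'max a' n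
      rw [hn] at hEq hR
      have hSM : S^[max M N] (p, b) = S^[max M N] (p, a) :=
        (hmono _ _ M _ (le_max_left _ _) hR).trans
          (hmono _ _ N _ (le_max_right _ _) hN.symm)
      have hb : b = a := by
        rw [hS, B.sigma_iter, B.sigma_iter] at hSM
        rw [Prod.ext_iff] at hSM
        exact add_right_cancel hSM.2
      exact ⟨n, Or.inr (by rw [hEq, hb])⟩
end

section
/- In a stationary ordered Bratteli diagram, let G be an abelian group and let φ : V → G satisfy Σ_{e ∈ E, t(e) = v} φ(s(e)) = φ(v) for every v ∈ V (i.e. Aᵀφ = φ). Let f_φ : Σ → G be the associated edge-level cocycle and φ_{f_φ} its tail cocycle. Then for every p ∈ Σ \ Σ_max with first edge e₀, φ_{f_φ}(p) = φ(s(e₀)). That is, the tail cocycle of f_φ equals the original skewing cocycle φ on all non-maximal paths. -/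
section Aux

/-- In a finite nonempty set of edges with a common target, there is a least
element with respect to `elt`. -/
lemma SBDiagram.exists_least_s13 (B : SBDiagram) [Fintype B.E] (s : Finset B.E)
    (hne : s.Nonempty) (hfib : ∀ e ∈ s, ∀ e' ∈ s, B.tgt e = B.tgt e') :
    ∃ e ∈ s, ∀ e' ∈ s, e' = e ∨ B.elt e e' := by
  classical
  obtain ⟨e, he, hmin⟩ := s.exists_min_image
    (fun e => (Finset.univ.filter (fun x => B.elt x e)).card) hne
  refine ⟨e, he, fun e' he' => ?_⟩
  by_cases h : e' = e
  · exact Or.inl h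
  · rcases B.elt_total (hfib e' he' e he) h with h1 | h1
    · exfalso
      have hsub : Finset.univ.filter (fun x => B.elt x e') ⊂
          Finset.univ.filter (fun x => B.elt x e) := by
        constructor
        · intro x hx
          simp only [Finset.mem_filter, Finset.mem_univ, true_and] at hx ⊢
          exact B.elt_trans hx h1
        · intro hsub'
          have he'mem : e' ∈ Finset.univ.filter (fun x => B.elt x e) := by
            simp only [Finset.mem_filter, Finset.mem_univ, true_and]
            exact h1
          have := hsub' he'mem
          simp only [Finset.mem_filter, Finset.mem_univ, true_and] at this
          exact B.elt_irrefl e' this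
      have h2 := Finset.card_lt_card hsub
      have h3 := hmin e' he'
      omega
    · exact Or.inr h1

lemma finsum_filter_eq {α : Type} [Fintype α] {G : Type*} [AddCommGroup G]
    (P : α → Prop) [DecidablePred P] (g : α → G) :
    ∑ᶠ x ∈ {x | P x}, g x = ∑ x ∈ Finset.univ.filter P, g x := by
  rw [← finsum_mem_coe_finset]
  congr 1
  ext x; simp

lemma SBDiagram.shift_iterate (B : SBDiagram) (p : B.Path) (N : ℕ) :
    ∀ k, (B.shift^[N] p).1 k = p.1 (k + N) := by
  induction N generalizing p with
  | zero => intro k; rfl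
  | succ n ih =>
    intro k
    rw [Function.iterate_succ_apply, ih]
    rfl

end Aux

/-- If `φ : V → G` satisfies `Σ_{e : t(e)=v} φ(s(e)) = φ(v)` for
every vertex `v` (i.e. `Aᵀφ = φ`), then the tail cocycle of the edge-level
cocycle `f_φ` equals the original skewing cocycle: `φ_{f_φ}(p) = φ(s(e₀))` for
every non-maximal path `p` with first edge `e₀`.
Here `fφ` and its tail cocycle `φfφ` are given by their defining properties. -/
theorem statement13 (B : SBDiagram) {G : Type*} [AddCommGroup G]
    (φ : B.V → G)
    (hφ : ∀ v : B.V, ∑ᶠ e ∈ {e : B.E | B.tgt e = v}, φ (B.src e) = φ v)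
    (fφ : B.Path → G)
    (hfφ : ∀ p : B.Path, fφ p =
      -∑ᶠ e' ∈ {e' : B.E | B.tgt e' = B.tgt (p.1 0) ∧ B.elt e' (p.1 0)},
        φ (B.src e'))
    (φfφ : B.Path → G)
    (hφfφ : ∀ (p : B.Path) (N : ℕ), B.shift^[N] p = B.shift^[N] (B.tau p) →
      φfφ p = ∑ i ∈ Finset.range N, (fφ (B.shift^[i] p) - fφ (B.shift^[i] (B.tau p))))
    (p : B.Path) (hp : ¬ B.IsMax p) :
    φfφ p = φ (B.src (p.1 0)) := by
  classical
  haveI := B.eFinite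
  haveI : Fintype B.E := Fintype.ofFinite B.E
  -- least non-maximal index
  have hex0 : ∃ n, ¬ B.MaxEdge (p.1 n) := by
    by_contra h; push_neg at h; exact hp h
  set n := Nat.find hex0 with hn_def
  have hn : ¬ B.MaxEdge (p.1 n) := Nat.find_spec hex0
  have hlt : ∀ k < n, B.MaxEdge (p.1 k) := fun k hk => not_not.mp (Nat.find_min hex0 hk)
  -- least element of every fiber
  have hminOf : ∀ v : B.V, ∃ e, B.tgt e = v ∧ ∀ e', B.tgt e' = v → e' = e ∨ B.elt e e' := by
    intro v
    obtain ⟨e0, he0⟩ := B.tgt_surj v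
    obtain ⟨e, he, hle⟩ := B.exists_least_s13 (Finset.univ.filter (fun x => B.tgt x = v))
      ⟨e0, by simp [he0]⟩
      (by intro a ha b hb
          simp only [Finset.mem_filter, Finset.mem_univ, true_and] at ha hb
          rw [ha, hb])
    simp only [Finset.mem_filter, Finset.mem_univ, true_and] at he
    exact ⟨e, he, fun e' he' => hle e' (by simp [he'])⟩
  choose minOf hminOf1 hminOf2 using hminOf
  -- successor of p.1 n in its fiber
  have hA : ∃ e1, (B.tgt e1 = B.tgt (p.1 n) ∧ B.elt (p.1 n) e1) ∧
      ∀ e', B.tgt e' = B.tgt (p.1 n) → B.elt (p.1 n) e' → e' = e1 ∨ B.elt e1 e' := by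
    have hne : ∃ e', B.tgt e' = B.tgt (p.1 n) ∧ B.elt (p.1 n) e' := by
      unfold SBDiagram.MaxEdge at hn
      push_neg at hn
      obtain ⟨e', ht, hne, hnel⟩ := hn
      rcases B.elt_total ht hne with h1 | h1
      · exact absurd h1 hnel
      · exact ⟨e', ht, h1⟩
    obtain ⟨e0, he0⟩ := hne
    obtain ⟨e, he, hle⟩ := B.exists_least_s13
      (Finset.univ.filter (fun x => B.tgt x = B.tgt (p.1 n) ∧ B.elt (p.1 n) x))
      ⟨e0, by simp [he0.1, he0.2]⟩
      (by intro a ha b hb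
          simp only [Finset.mem_filter, Finset.mem_univ, true_and] at ha hb
          rw [ha.1, hb.1])
    simp only [Finset.mem_filter, Finset.mem_univ, true_and] at he
    exact ⟨e, he, fun e' ht hel => hle e' (by simp [ht, hel])⟩
  obtain ⟨e1, ⟨he1t, he1e⟩, he1least⟩ := hA
  -- construct the successor path q
  set aux : ℕ → B.E := fun j => Nat.rec e1 (fun _ prev => minOf (B.src prev)) j with haux_def
  have haux0 : aux 0 = e1 := rfl
  have hauxS : ∀ j, aux (j + 1) = minOf (B.src (aux j)) := fun j => rfl
  set qf : ℕ → B.E := fun k => if n < k then p.1 k else aux (n - k) with hqf_def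
  have hqf_gt : ∀ k, n < k → qf k = p.1 k := fun k hk => if_pos hk
  have hqf_le : ∀ k, k ≤ n → qf k = aux (n - k) := fun k hk => if_neg (by omega)
  have hq_adm : B.Admissible qf := by
    intro k
    rcases lt_trichotomy k n with hk | hk | hk
    · rw [hqf_le k (le_of_lt hk), hqf_le (k + 1) hk]
      have h1 : n - k = (n - (k + 1)) + 1 := by omega
      rw [h1, hauxS]
      exact hminOf1 _
    · have h0 : n - k = 0 := by omega
      rw [hqf_le k hk.le, hqf_gt (k + 1) (by omega), h0, haux0, he1t, hk]
      exact p.2 n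
    · rw [hqf_gt k hk, hqf_gt (k + 1) (by omega)]
      exact p.2 k
  have hqfn : qf n = e1 := by rw [hqf_le n le_rfl, Nat.sub_self, haux0]
  -- q is a tau-pair for p
  have hexq : ∃ q : B.Path, B.IsTauPair p q := by
    refine ⟨⟨qf, hq_adm⟩, n, hlt, hn, fun k hk => hqf_gt k hk, ?_, ?_⟩
    · refine ⟨?_, ?_, ?_⟩
      · show B.tgt (qf n) = B.tgt (p.1 n)
        rw [hqfn]; exact he1t
      · show B.elt (p.1 n) (qf n)
        rw [hqfn]; exact he1e
      · intro e ht hel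
        show e = qf n ∨ B.elt (qf n) e
        rw [hqfn]
        exact he1least e ht hel
    · intro k hk e ht
      obtain ⟨j, hj⟩ : ∃ j, n - k = j + 1 := ⟨n - k - 1, by omega⟩
      have h1 : qf k = minOf (B.src (aux j)) := by
        rw [hqf_le k (le_of_lt hk), hj, hauxS]
      have ht2 : B.tgt e = B.tgt (qf k) := ht
      rw [h1, hminOf1] at ht2
      show e = qf k ∨ B.elt (qf k) e
      rw [h1]
      exact hminOf2 _ e ht2
  have htaueq : B.tau p = hexq.choose := by
    unfold SBDiagram.tau
    exact dif_pos hexq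
  have htau : B.IsTauPair p (B.tau p) := by
    rw [htaueq]; exact hexq.choose_spec
  set q := B.tau p with hq_def
  obtain ⟨m, hmax, hnmax, hgt, ⟨htgtn, heltn, hleastn⟩, hminlt⟩ := htau
  -- the shift agreement
  have hNshift : B.shift^[m + 1] p = B.shift^[m + 1] q := by
    apply Subtype.ext
    funext k
    rw [B.shift_iterate, B.shift_iterate]
    exact (hgt (k + (m + 1)) (by omega)).symm
  -- convert finsums to finset sums
  have hf : ∀ r : B.Path, fφ r =
      -∑ e' ∈ Finset.univ.filter
        (fun e' => B.tgt e' = B.tgt (r.1 0) ∧ B.elt e' (r.1 0)), φ (B.src e') := by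
    intro r
    rw [hfφ r, finsum_filter_eq]
  have hφ' : ∀ v, ∑ e ∈ Finset.univ.filter (fun e => B.tgt e = v), φ (B.src e) = φ v := by
    intro v
    rw [← finsum_filter_eq]; exact hφ v
  have hp0 : ∀ i, (B.shift^[i] p).1 0 = p.1 i := by
    intro i; rw [B.shift_iterate]; norm_num
  have hq0 : ∀ i, (B.shift^[i] q).1 0 = q.1 i := by
    intro i; rw [B.shift_iterate]; norm_num
  -- terms for i < m
  have hterm_lt : ∀ i < m, fφ (B.shift^[i] p) - fφ (B.shift^[i] q) =
      φ (B.src (p.1 i)) - φ (B.src (p.1 (i + 1))) := by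
    intro i hi
    rw [hf, hf, hp0, hq0]
    have h1 : Finset.univ.filter
        (fun e' => B.tgt e' = B.tgt (q.1 i) ∧ B.elt e' (q.1 i)) = ∅ := by
      ext e'
      simp only [Finset.mem_filter, Finset.mem_univ, true_and, Finset.notMem_empty,
        iff_false, not_and]
      intro ht he
      rcases hminlt i hi e' ht with h | h
      · exact B.elt_irrefl _ (h ▸ he)
      · exact B.elt_irrefl _ (B.elt_trans he h)
    have h2 : Finset.univ.filter
        (fun e' => B.tgt e' = B.tgt (p.1 i) ∧ B.elt e' (p.1 i)) =
        (Finset.univ.filter (fun e' => B.tgt e' = B.tgt (p.1 i))).erase (p.1 i) := by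
      ext e'
      simp only [Finset.mem_filter, Finset.mem_univ, true_and, Finset.mem_erase]
      constructor
      · rintro ⟨ht, he⟩
        refine ⟨?_, ht⟩
        rintro rfl
        exact B.elt_irrefl _ he
      · rintro ⟨hne, ht⟩
        refine ⟨ht, ?_⟩
        rcases hmax i hi e' ht with h | h
        · exact absurd h hne
        · exact h
    rw [h1, h2, Finset.sum_empty, Finset.sum_erase_eq_sub (by simp), hφ' (B.tgt (p.1 i))]
    rw [p.2 i]
    abel
  -- the term at m
  have hterm_m : fφ (B.shift^[m] p) - fφ (B.shift^[m] q) = φ (B.src (p.1 m)) := by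
    rw [hf, hf, hp0, hq0]
    have hset : Finset.univ.filter
        (fun e' => B.tgt e' = B.tgt (q.1 m) ∧ B.elt e' (q.1 m)) =
        insert (p.1 m) (Finset.univ.filter
          (fun e' => B.tgt e' = B.tgt (p.1 m) ∧ B.elt e' (p.1 m))) := by
      ext e'
      simp only [Finset.mem_insert, Finset.mem_filter, Finset.mem_univ, true_and]
      constructor
      · rintro ⟨ht, he⟩
        by_cases h : e' = p.1 m
        · exact Or.inl h
        · have ht' : B.tgt e' = B.tgt (p.1 m) := ht.trans htgtn
          refine Or.inr ⟨ht', ?_⟩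
          rcases B.elt_total ht' h with h1 | h1
          · exact h1
          · exfalso
            rcases hleastn e' ht' h1 with h2 | h2
            · exact B.elt_irrefl _ (h2 ▸ he)
            · exact B.elt_irrefl _ (B.elt_trans he h2)
      · rintro (rfl | ⟨ht, he⟩)
        · exact ⟨htgtn.symm, heltn⟩
        · exact ⟨ht.trans htgtn.symm, B.elt_trans he heltn⟩
    have hnotmem : p.1 m ∉ Finset.univ.filter
        (fun e' => B.tgt e' = B.tgt (p.1 m) ∧ B.elt e' (p.1 m)) := by
      intro hmem
      simp only [Finset.mem_filter, Finset.mem_univ, true_and] at hmem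
      exact B.elt_irrefl _ hmem
    rw [hset, Finset.sum_insert hnotmem]
    abel
  -- put it together
  rw [hφfφ p (m + 1) hNshift, Finset.sum_range_succ, hterm_m,
    Finset.sum_congr rfl (fun i hi => hterm_lt i (Finset.mem_range.mp hi)),
    Finset.sum_range_sub' (fun i => φ (B.src (p.1 i)))]
  abel
end

section
/- Let V be a finite nonempty set, E a finite set of edges with source and target maps s, t : E → V, and assume that for every pair of vertices u, v ∈ V there exists at least one edge e ∈ E with s(e) = u and t(e) = v (positive transition matrix). Let G be an abelian group and f : E → G any function. A closed path of length n ≥ 1 is a finite sequence (e₁,…,e_n) ∈ Eⁿ with t(e_i) = s(e_{i+1}) for 1 ≤ i < n and t(e_n) = s(e₁); its weight is w(e₁,…,e_n) = Σ_{i=1}^{n} f(e_i). Then the set Δ = {w(c₁) − w(c₂) : n ≥ 1 and c₁, c₂ are closed paths of length n} is an additive subgroup of G. -/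
/-!
Fix a vertex `v`. A closed path through `u` can be conjugated into a loop at `v` by a round trip
`v → u → v`, and padding each of two loops with the other's round trip equalises their lengths
without changing the difference of weights. Hence `Δ` is the set of weight differences of
equal-length loops at `v`, which is a subgroup because loops at `v` can be concatenated.
-/

namespace ClosedPath

variable {V E G : Type*} [AddCommGroup G] (s t : E → V)

def IsWalk : V → V → List E → Prop
  | u, v, [] => u = v
  | u, v, e :: l => s e = u ∧ IsWalk (t e) v l

def IsClosed {n : ℕ} (c : Fin (n + 1) → E) : Prop :=
  ∀ i : Fin (n + 1), t (c i) = s (c (i + 1))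

def weight (f : E → G) (l : List E) : G :=
  (l.map f).sum

def closedWeightDiffs (f : E → G) : Set G :=
  {g | ∃ n : ℕ, ∃ c₁ c₂ : Fin (n + 1) → E, IsClosed s t c₁ ∧ IsClosed s t c₂ ∧
    g = (∑ i, f (c₁ i)) - ∑ i, f (c₂ i)}

variable {s t}

theorem IsWalk.append {u v w : V} {l₁ l₂ : List E} (h₁ : IsWalk s t u v l₁)
    (h₂ : IsWalk s t v w l₂) : IsWalk s t u w (l₁ ++ l₂) := by
  induction l₁ generalizing u with
  | nil => exact (h₁ : u = v) ▸ h₂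
  | cons e l ih => exact ⟨h₁.1, ih h₁.2⟩

theorem isWalk_ofFn_iff {n : ℕ} {c : Fin (n + 1) → E} {u v : V} :
    IsWalk s t u v (List.ofFn c) ↔ s (c 0) = u ∧
      (∀ i : Fin n, t (c i.castSucc) = s (c i.succ)) ∧ t (c (Fin.last n)) = v := by
  induction n generalizing u with
  | zero => simp [IsWalk, Fin.last]
  | succ n ih =>
    rw [List.ofFn_succ, IsWalk, ih, Fin.forall_fin_succ]
    simp only [Fin.succ_castSucc, Fin.succ_last, Fin.castSucc_zero, Fin.succ_zero_eq_one,
      eq_comm (a := s (c 1)), and_assoc]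

theorem isClosed_iff_exists_isWalk {n : ℕ} {c : Fin (n + 1) → E} :
    IsClosed s t c ↔ ∃ u, IsWalk s t u u (List.ofFn c) := by
  simp only [isWalk_ofFn_iff, IsClosed, Fin.forall_fin_succ' (P := fun i => t (c i) = _),
    Fin.coeSucc_eq_succ, Fin.last_add_one, exists_eq_left']

theorem weight_ofFn (f : E → G) {n : ℕ} (c : Fin n → E) :
    weight f (List.ofFn c) = ∑ i, f (c i) := by
  rw [weight, List.map_ofFn, List.sum_ofFn]
  rfl

@[simp]
theorem weight_cons (f : E → G) (e : E) (l : List E) : weight f (e :: l) = f e + weight f l := by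
  rw [weight, List.map_cons, List.sum_cons, weight]

theorem weight_append (f : E → G) (l₁ l₂ : List E) :
    weight f (l₁ ++ l₂) = weight f l₁ + weight f l₂ := by
  rw [weight, List.map_append, List.sum_append, weight, weight]

variable (s t) in
def loopWeightDiffs (f : E → G) (v : V) : AddSubgroup G where
  carrier := {g | ∃ l₁ l₂, IsWalk s t v v l₁ ∧ IsWalk s t v v l₂ ∧ l₁.length = l₂.length ∧
    weight f l₁ - weight f l₂ = g}
  zero_mem' := ⟨[], [], rfl, rfl, rfl, sub_self _⟩
  add_mem' := by
    rintro _ _ ⟨l₁, l₂, h₁, h₂, hl, rfl⟩ ⟨k₁, k₂, h₁', h₂', hk, rfl⟩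
    refine ⟨l₁ ++ k₁, l₂ ++ k₂, h₁.append h₁', h₂.append h₂', by simp [hl, hk], ?_⟩
    simp only [weight_append]
    abel
  neg_mem' := by
    rintro _ ⟨l₁, l₂, h₁, h₂, hl, rfl⟩
    exact ⟨l₂, l₁, h₂, h₁, hl.symm, (neg_sub _ _).symm⟩

/-- Each loop is followed by the other's round trip, so the two loops at `v` have equal length. -/
theorem weight_sub_mem_loopWeightDiffs {f : E → G} {u₁ u₂ v : V}
    {l₁ l₂ p₁ q₁ p₂ q₂ : List E} (h₁ : IsWalk s t u₁ u₁ l₁) (h₂ : IsWalk s t u₂ u₂ l₂)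
    (hlen : l₁.length = l₂.length) (hp₁ : IsWalk s t v u₁ p₁) (hq₁ : IsWalk s t u₁ v q₁)
    (hp₂ : IsWalk s t v u₂ p₂) (hq₂ : IsWalk s t u₂ v q₂) :
    weight f l₁ - weight f l₂ ∈ loopWeightDiffs s t f v := by
  refine ⟨p₁ ++ l₁ ++ q₁ ++ (p₂ ++ q₂), p₂ ++ l₂ ++ q₂ ++ (p₁ ++ q₁),
    ((hp₁.append h₁).append hq₁).append (hp₂.append hq₂),
    ((hp₂.append h₂).append hq₂).append (hp₁.append hq₁), ?_, ?_⟩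
  · simp only [List.length_append, hlen]
    omega
  · simp only [weight_append]
    abel

theorem exists_ofFn_eq {α : Type*} {l : List α} {n : ℕ} (h : l.length = n) :
    ∃ c : Fin n → α, List.ofFn c = l := by
  subst h
  exact ⟨_, List.ofFn_getElem⟩

theorem closedWeightDiffs_subset_loopWeightDiffs (f : E → G) (v : V)
    (hconn : ∀ u w : V, ∃ p, IsWalk s t u w p) :
    closedWeightDiffs s t f ⊆ loopWeightDiffs s t f v := by
  rintro _ ⟨n, c₁, c₂, hc₁, hc₂, rfl⟩
  obtain ⟨u₁, h₁⟩ := isClosed_iff_exists_isWalk.mp hc₁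
  obtain ⟨u₂, h₂⟩ := isClosed_iff_exists_isWalk.mp hc₂
  obtain ⟨p₁, hp₁⟩ := hconn v u₁
  obtain ⟨q₁, hq₁⟩ := hconn u₁ v
  obtain ⟨p₂, hp₂⟩ := hconn v u₂
  obtain ⟨q₂, hq₂⟩ := hconn u₂ v
  rw [← weight_ofFn, ← weight_ofFn]
  exact weight_sub_mem_loopWeightDiffs h₁ h₂ (by simp) hp₁ hq₁ hp₂ hq₂

/-- Loops at `v` may be empty; prefixing the loop edge `e` turns them into closed paths. -/
theorem loopWeightDiffs_subset_closedWeightDiffs (f : E → G) {v : V} {e : E} (hs : s e = v)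
    (ht : t e = v) : (loopWeightDiffs s t f v : Set G) ⊆ closedWeightDiffs s t f := by
  rintro _ ⟨l₁, l₂, h₁, h₂, hlen, rfl⟩
  obtain ⟨c₁, hc₁⟩ := exists_ofFn_eq (l := e :: l₁) rfl
  obtain ⟨c₂, hc₂⟩ := exists_ofFn_eq (l := e :: l₂) (congrArg (· + 1) hlen.symm)
  refine ⟨l₁.length, c₁, c₂, isClosed_iff_exists_isWalk.mpr ⟨v, hc₁ ▸ ⟨hs, ht ▸ h₁⟩⟩,
    isClosed_iff_exists_isWalk.mpr ⟨v, hc₂ ▸ ⟨hs, ht ▸ h₂⟩⟩, ?_⟩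
  rw [← weight_ofFn, ← weight_ofFn, hc₁, hc₂, weight_cons, weight_cons, add_sub_add_left_eq_sub]

end ClosedPath

open ClosedPath in
theorem statement14_general {V E : Type*} [Nonempty V]
    {G : Type*} [AddCommGroup G]
    (s t : E → V) (hpos : ∀ u v : V, ∃ e : E, s e = u ∧ t e = v)
    (f : E → G) :
    ∃ H : AddSubgroup G, (H : Set G) =
      {g : G | ∃ n : ℕ, ∃ c₁ c₂ : Fin (n + 1) → E,
        (∀ i : Fin (n + 1), t (c₁ i) = s (c₁ (i + 1))) ∧
        (∀ i : Fin (n + 1), t (c₂ i) = s (c₂ (i + 1))) ∧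
        g = (∑ i : Fin (n + 1), f (c₁ i)) - (∑ i : Fin (n + 1), f (c₂ i))} := by
  obtain ⟨v⟩ := ‹Nonempty V›
  have hconn : ∀ u w : V, ∃ p, IsWalk s t u w p := fun u w ↦
    let ⟨e, hs, ht⟩ := hpos u w
    ⟨[e], hs, ht⟩
  obtain ⟨e, hs, ht⟩ := hpos v v
  exact ⟨loopWeightDiffs s t f v,
    (loopWeightDiffs_subset_closedWeightDiffs f hs ht).antisymm
      (closedWeightDiffs_subset_loopWeightDiffs f v hconn)⟩

/-- The set of differences of weights of closed paths of equal
length (≥ 1) in a finite directed multigraph with positive transition matrix is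
a subgroup of `G`.  A closed path of length `n + 1` is `c : Fin (n+1) → E` with
`t (c i) = s (c (i+1))` for all `i` (addition in `Fin (n+1)`, so the condition
at `i = n` closes the path). -/
theorem statement14 {V E : Type*} [Finite V] [Finite E] [Nonempty V]
    {G : Type*} [AddCommGroup G]
    (s t : E → V) (hpos : ∀ u v : V, ∃ e : E, s e = u ∧ t e = v)
    (f : E → G) :
    ∃ H : AddSubgroup G, (H : Set G) =
      {g : G | ∃ n : ℕ, ∃ c₁ c₂ : Fin (n + 1) → E,
        (∀ i : Fin (n + 1), t (c₁ i) = s (c₁ (i + 1))) ∧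
        (∀ i : Fin (n + 1), t (c₂ i) = s (c₂ (i + 1))) ∧
        g = (∑ i : Fin (n + 1), f (c₁ i)) - (∑ i : Fin (n + 1), f (c₂ i))} :=
  statement14_general s t hpos f
end

section
/- Let Σ be a set, σ : Σ → Σ a map, G an abelian group, and f : Σ → G a function. Suppose γ : G → S¹ is a group homomorphism into the circle group, z ∈ S¹, and g : Σ → S¹ satisfies γ(f(p)) · g(p) = z · g(σ(p)) for every p ∈ Σ. Then γ(δ) = 1 for every δ ∈ Δ, where Δ = {S^σ_n f(p₁) − S^σ_n f(p₂) : n ≥ 1, p₁, p₂ ∈ Fix_n(σ)}. -/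
lemma statement16_aux {S G : Type*} [AddCommGroup G]
    (σ : S → S) (f : S → G)
    (γ : AddChar G Circle) (z : Circle) (g : S → Circle)
    (h : ∀ p : S, γ (f p) * g p = z * g (σ p)) :
    ∀ (n : ℕ) (p : S),
      γ (∑ i ∈ Finset.range n, f (σ^[i] p)) * g p = z ^ n * g (σ^[n] p) := by
  intro n
  induction n with
  | zero => simp
  | succ n ih =>
    intro p
    rw [Finset.sum_range_succ, AddChar.map_add_eq_mul, Function.iterate_succ_apply',
      mul_comm (γ _) (γ _), mul_assoc, ih p, mul_left_comm, h, pow_succ, mul_assoc,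
      mul_left_comm]

/-- If `γ∘f · g = z · g∘σ` pointwise, then `γ` is trivial on the
group `Δ` of differences of Birkhoff sums of `f` over periodic points of the
same period. -/
theorem statement16 {S G : Type*} [AddCommGroup G]
    (σ : S → S) (f : S → G)
    (γ : AddChar G Circle) (z : Circle) (g : S → Circle)
    (h : ∀ p : S, γ (f p) * g p = z * g (σ p))
    (Δ : Set G)
    (hΔ : Δ = {δ : G | ∃ (n : ℕ) (p₁ p₂ : S), 1 ≤ n ∧ σ^[n] p₁ = p₁ ∧ σ^[n] p₂ = p₂ ∧
      δ = ∑ i ∈ Finset.range n, f (σ^[i] p₁) - ∑ i ∈ Finset.range n, f (σ^[i] p₂)}) :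
    ∀ δ ∈ Δ, γ δ = 1 := by
  subst hΔ
  rintro δ ⟨n, p₁, p₂, -, h1, h2, rfl⟩
  have k1 := statement16_aux σ f γ z g h n p₁
  have k2 := statement16_aux σ f γ z g h n p₂
  rw [h1] at k1
  rw [h2] at k2
  have e1 : γ (∑ i ∈ Finset.range n, f (σ^[i] p₁)) = z ^ n :=
    mul_right_cancel k1
  have e2 : γ (∑ i ∈ Finset.range n, f (σ^[i] p₂)) = z ^ n :=
    mul_right_cancel k2
  rw [AddChar.map_sub_eq_div, e1, e2, div_self']
end

section
/- Let Σ be a set, σ : Σ → Σ a map, G an abelian group, and f : Σ → G a function. Suppose that Fix₁(σ) = {p : σ(p) = p} is nonempty and that Δ = {S^σ_n f(p₁) − S^σ_n f(p₂) : n ≥ 1, p₁, p₂ ∈ Fix_n(σ)} equals all of G. If γ : G → S¹ is a group homomorphism, z ∈ S¹, and g : Σ → S¹ satisfy γ(f(p)) · g(p) = z · g(σ(p)) for every p ∈ Σ, then γ is the trivial homomorphism, z = 1, and g is σ-invariant: g(σ(p)) = g(p) for all p ∈ Σ. (In particular, if no non-constant σ-invariant g exists, f is aperiodic.) -/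
/-- If `Fix₁(σ) ≠ ∅` and the group `Δ` of differences of Birkhoff
sums over periodic points equals all of `G`, then any solution of
`γ∘f · g = z · g∘σ` has `γ` trivial, `z = 1`, and `g` σ-invariant. -/
theorem statement17 {S G : Type*} [AddCommGroup G]
    (σ : S → S) (f : S → G)
    (hfix : ∃ p : S, σ p = p)
    (hΔ : {δ : G | ∃ (n : ℕ) (p₁ p₂ : S), 1 ≤ n ∧ σ^[n] p₁ = p₁ ∧ σ^[n] p₂ = p₂ ∧
      δ = ∑ i ∈ Finset.range n, f (σ^[i] p₁) - ∑ i ∈ Finset.range n, f (σ^[i] p₂)}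
      = Set.univ)
    (γ : AddChar G Circle) (z : Circle) (g : S → Circle)
    (h : ∀ p : S, γ (f p) * g p = z * g (σ p)) :
    (∀ a : G, γ a = 1) ∧ z = 1 ∧ ∀ p : S, g (σ p) = g p := by
  have key : ∀ (n : ℕ) (p : S),
      γ (∑ i ∈ Finset.range n, f (σ^[i] p)) * g p = z ^ n * g (σ^[n] p) := by
    intro n p
    induction n with
    | zero => simp
    | succ n ih =>
      rw [Finset.sum_range_succ, AddChar.map_add_eq_mul, Function.iterate_succ_apply',
        pow_succ]
      calc γ (∑ i ∈ Finset.range n, f (σ^[i] p)) * γ (f (σ^[n] p)) * g p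
          = γ (f (σ^[n] p)) * (γ (∑ i ∈ Finset.range n, f (σ^[i] p)) * g p) := by
            simp [mul_comm, mul_left_comm, mul_assoc]
        _ = γ (f (σ^[n] p)) * (z ^ n * g (σ^[n] p)) := by rw [ih]
        _ = z ^ n * (γ (f (σ^[n] p)) * g (σ^[n] p)) := by simp [mul_comm, mul_left_comm, mul_assoc]
        _ = z ^ n * (z * g (σ (σ^[n] p))) := by rw [h]
        _ = z ^ n * z * g (σ (σ^[n] p)) := by simp [mul_comm, mul_left_comm, mul_assoc]
  have per : ∀ (n : ℕ) (p : S), σ^[n] p = p →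
      γ (∑ i ∈ Finset.range n, f (σ^[i] p)) = z ^ n := by
    intro n p hp
    have := key n p
    rw [hp] at this
    exact mul_right_cancel this
  have htriv : ∀ a : G, γ a = 1 := by
    intro a
    have : a ∈ {δ : G | ∃ (n : ℕ) (p₁ p₂ : S), 1 ≤ n ∧ σ^[n] p₁ = p₁ ∧ σ^[n] p₂ = p₂ ∧
      δ = ∑ i ∈ Finset.range n, f (σ^[i] p₁) - ∑ i ∈ Finset.range n, f (σ^[i] p₂)} := by
      rw [hΔ]; trivial
    obtain ⟨n, p₁, p₂, _, h₁, h₂, rfl⟩ := this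
    rw [sub_eq_add_neg, AddChar.map_add_eq_mul, AddChar.map_neg_eq_inv, per n p₁ h₁, per n p₂ h₂,
      mul_inv_cancel]
  have hz : z = 1 := by
    obtain ⟨p₀, hp₀⟩ := hfix
    have := h p₀
    rw [htriv, one_mul, hp₀] at this
    have h2 : z * g p₀ = 1 * g p₀ := by rw [one_mul]; exact this.symm
    exact mul_right_cancel h2
  refine ⟨htriv, hz, fun p => ?_⟩
  have := h p
  rw [htriv, one_mul, hz, one_mul] at this
  exact this.symm
end
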